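/- arXiv:1410.3652 — 4 statements merged into one kernel-verified Lean document; each statement's English description precedes it below -/
import Mathlib

section
/- Let X = p∂/∂x + q∂/∂y be a polynomial vector field with polynomial first integral H = f1^{n1} ⋯ fr^{nr} where r ≥ 2. If for every i ∈ {2,…,r} there exists α_i ∈ ℂ with f_i = f_1 + α_i, then f_1 itself is a first integral of X. -/
/-!
Write `fᵢ = g + αᵢ` with `g = f₁`, so that `H = P(g)` for the one-variable polynomial
`P = ∏ (T + αᵢ)^{nᵢ}`. Since `X` is a derivation, `X(H) = P'(g) · X(g)`. A nonconstant
polynomial over the algebraically closed field `ℂ` is transcendental over `ℂ`, and `P' ≠ 0`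
because `P` has positive degree, so `P'(g) ≠ 0` and hence `X(g) = 0`.
-/

open MvPolynomial

theorem IsAlgebraic.mem_range_algebraMap_of_isAlgClosed {K A : Type*} [Field K] [IsAlgClosed K]
    [CommRing A] [IsDomain A] [Algebra K A] {x : A} (hx : IsAlgebraic K x) :
    x ∈ Set.range (algebraMap K A) := by
  have hint : IsIntegral K x := hx.isIntegral
  have hlin : (minpoly K x).degree = 1 :=
    IsAlgClosed.degree_eq_one_of_irreducible K (minpoly.irreducible hint)
  have hroot := minpoly.aeval K x
  rw [Polynomial.eq_X_add_C_of_degree_eq_one hlin, (minpoly.monic hint).leadingCoeff,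
    Polynomial.C_1, one_mul, map_add, Polynomial.aeval_X, Polynomial.aeval_C,
    add_eq_zero_iff_eq_neg] at hroot
  exact ⟨-(minpoly K x).coeff 0, (map_neg _ _).trans hroot.symm⟩

theorem MvPolynomial.transcendental_of_totalDegree_ne_zero {σ K : Type*} [Field K]
    [IsAlgClosed K] {g : MvPolynomial σ K} (hg : g.totalDegree ≠ 0) : Transcendental K g := by
  intro halg
  obtain ⟨c, rfl⟩ := halg.mem_range_algebraMap_of_isAlgClosed
  exact hg (by rw [algebraMap_eq, totalDegree_C])

theorem Polynomial.derivative_prod_X_add_C_pow_ne_zero {K ι : Type*} [CommSemiring K]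
    [Nontrivial K] [IsAddTorsionFree K]
    {s : Finset ι} (α : ι → K) (n : ι → ℕ) {i : ι} (hi : i ∈ s) (hni : n i ≠ 0) :
    derivative (∏ j ∈ s, (X + C (α j)) ^ n j) ≠ 0 := by
  intro hder
  rw [derivative_eq_zero, natDegree_prod_of_monic _ _ fun j _ => (monic_X_add_C (α j)).pow (n j),
    Finset.sum_eq_zero_iff] at hder
  exact hni (by simpa using hder i hi)

theorem Derivation.eq_zero_of_map_aeval_eq_zero {R A : Type*} [CommRing R] [CommRing A]
    [IsDomain A] [Algebra R A] (D : Derivation R A A) {x : A} (hx : Transcendental R x)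
    {P : Polynomial R} (hP : Polynomial.derivative P ≠ 0) (h : D (Polynomial.aeval x P) = 0) :
    D x = 0 := by
  rw [D.map_aeval, smul_eq_mul] at h
  exact (mul_eq_zero.mp h).resolve_left fun h' => hP (transcendental_iff.mp hx _ h')

/-- If `X = p∂x + q∂y` has polynomial first integral `H = ∏ fᵢ^{nᵢ}` with `r ≥ 2`
and every `fᵢ` differs from `f₁` by a constant, then `f₁` itself is a first integral. -/
theorem stmt_1 {r : ℕ} (hr : 2 ≤ r) (p q : MvPolynomial (Fin 2) ℂ)
    (f : Fin r → MvPolynomial (Fin 2) ℂ) (n : Fin r → ℕ) (hn : ∀ i, 0 < n i)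
    (hfnc : ∀ i, (f i).totalDegree ≠ 0)
    (hfi : p * pderiv 0 (∏ i, f i ^ n i) + q * pderiv 1 (∏ i, f i ^ n i) = 0)
    (hα : ∀ i : Fin r, ∃ α : ℂ, f i = f ⟨0, by omega⟩ + C α) :
    p * pderiv 0 (f ⟨0, by omega⟩) + q * pderiv 1 (f ⟨0, by omega⟩) = 0 := by
  set g := f ⟨0, by omega⟩
  choose α hα using hα
  let D : Derivation ℂ (MvPolynomial (Fin 2) ℂ) (MvPolynomial (Fin 2) ℂ) :=
    p • pderiv 0 + q • pderiv 1
  have hD : ∀ h, D h = p * pderiv 0 h + q * pderiv 1 h := fun _ => rfl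
  have hH : ∏ i, f i ^ n i =
      Polynomial.aeval g (∏ i, (Polynomial.X + Polynomial.C (α i)) ^ n i) := by
    simp only [map_prod, map_pow, map_add, Polynomial.aeval_X, Polynomial.aeval_C, algebraMap_eq]
    exact Finset.prod_congr rfl fun i _ => by rw [← hα i]
  rw [← hD]
  refine D.eq_zero_of_map_aeval_eq_zero (transcendental_of_totalDegree_ne_zero (hfnc _))
    (Polynomial.derivative_prod_X_add_C_pow_ne_zero α n (Finset.mem_univ ⟨0, by omega⟩)
      (hn _).ne') ?_
  rw [← hH, hD, hfi]
end

section
/- Conversely, if f_i = 0 (1 ≤ i ≤ r) are invariant algebraic curves of X with cofactors k_i, the f_i pairwise coprime, and H = f1^{λ1} ⋯ fr^{λr} (λ_i positive integers) is a first integral of X, then Σ_{i=1}^r λ_i k_i = 0. -/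
open MvPolynomial

/-
The vector field `X = p ∂/∂x + q ∂/∂y` is a derivation of `ℂ[x,y]`, and for any derivation the
logarithmic-derivative rule gives `X (∏ fᵢ ^ λᵢ) = (∑ λᵢ kᵢ) ∏ fᵢ ^ λᵢ` whenever `X fᵢ = kᵢ fᵢ`.
If `H = ∏ fᵢ ^ λᵢ` is a first integral the left side vanishes, and `H ≠ 0` in the domain
`ℂ[x,y]` because no `fᵢ` is zero, so `∑ λᵢ kᵢ = 0`.
-/

namespace Derivation

variable {R A : Type*} [CommSemiring R] [CommSemiring A] [Algebra R A] (D : Derivation R A A)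

theorem apply_pow_of_apply_eq_mul {a c : A} (h : D a = c * a) (n : ℕ) :
    D (a ^ n) = n * c * a ^ n := by
  cases n with
  | zero => simp
  | succ m =>
    rw [leibniz_pow, h, nsmul_eq_mul, smul_eq_mul, Nat.add_sub_cancel, pow_succ]
    ring

theorem apply_prod_pow_of_apply_eq_mul {ι : Type*} (s : Finset ι) {f k : ι → A}
    (h : ∀ i ∈ s, D (f i) = k i * f i) (n : ι → ℕ) :
    D (∏ i ∈ s, f i ^ n i) = (∑ i ∈ s, n i * k i) * ∏ i ∈ s, f i ^ n i := by
  classical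
  induction s using Finset.induction with
  | empty => simp
  | insert a s has ih =>
    rw [Finset.prod_insert has, Finset.sum_insert has, leibniz, smul_eq_mul, smul_eq_mul,
      ih fun i hi => h i (Finset.mem_insert_of_mem hi),
      D.apply_pow_of_apply_eq_mul (h a (Finset.mem_insert_self a s))]
    ring

end Derivation

theorem stmt_3_general {r : ℕ} (p q : MvPolynomial (Fin 2) ℂ)
    (f k : Fin r → MvPolynomial (Fin 2) ℂ)
    (hfnc : ∀ i, (f i).totalDegree ≠ 0)
    (hinv : ∀ i, p * pderiv 0 (f i) + q * pderiv 1 (f i) = k i * f i)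
    (lam : Fin r → ℕ)
    (hfi : p * pderiv 0 (∏ i, f i ^ lam i) + q * pderiv 1 (∏ i, f i ^ lam i) = 0) :
    ∑ i, (lam i : MvPolynomial (Fin 2) ℂ) * k i = 0 := by
  let X : Derivation ℂ (MvPolynomial (Fin 2) ℂ) (MvPolynomial (Fin 2) ℂ) :=
    p • pderiv 0 + q • pderiv 1
  have hXH := X.apply_prod_pow_of_apply_eq_mul Finset.univ (fun i _ => hinv i) lam
  have hH : ∏ i, f i ^ lam i ≠ 0 := Finset.prod_ne_zero_iff.mpr fun i _ =>
    pow_ne_zero _ fun hf => hfnc i (by rw [hf, totalDegree_zero])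
  exact (mul_eq_zero.mp (hXH.symm.trans hfi)).resolve_right hH

/-- Converse: if `fᵢ = 0` are invariant curves of `X` with cofactors `kᵢ`, the `fᵢ` pairwise
coprime and non-constant, and `H = ∏ fᵢ^{λᵢ}` (with `λᵢ > 0`) is a first integral of `X`,
then `∑ λᵢ kᵢ = 0`. -/
theorem stmt_3 {r : ℕ} (p q : MvPolynomial (Fin 2) ℂ)
    (f k : Fin r → MvPolynomial (Fin 2) ℂ)
    (hfnc : ∀ i, (f i).totalDegree ≠ 0)
    (hcop : ∀ i j, i ≠ j → IsCoprime (f i) (f j))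
    (hinv : ∀ i, p * pderiv 0 (f i) + q * pderiv 1 (f i) = k i * f i)
    (lam : Fin r → ℕ) (hlam : ∀ i, 0 < lam i)
    (hfi : p * pderiv 0 (∏ i, f i ^ lam i) + q * pderiv 1 (∏ i, f i ^ lam i) = 0) :
    ∑ i, (lam i : MvPolynomial (Fin 2) ℂ) * k i = 0 :=
  stmt_3_general p q f k hfnc hinv lam hfi
end

section
/- Let A, B, C be homogeneous polynomials of degree d+1 in X, Y, Z satisfying the projectivity condition X·A + Y·B + Z·C = 0. Then there exist homogeneous polynomials P, Q, R of degree d such that A = Z·Q − Y·R, B = X·R − Z·P and C = Y·P − X·Q. -/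
/-!
The variables form a regular sequence: `X i` is a non-zero-divisor modulo the ideal spanned by
any set of other variables, as one sees by comparing supports. Since `X·A ∈ (Y, Z)`, this gives
`A = Z·Q - Y·R`; substituting, `Y·(B - X·R) ∈ (Z)`, so `B - X·R = -Z·P`, and cancelling `Z`
yields `C = Y·P - X·Q`. This works for arbitrary polynomials; homogeneous solutions are then
obtained by replacing `P, Q, R` with their homogeneous components of degree `d`.
-/

open MvPolynomial

namespace MvPolynomial

variable {σ R : Type*}

theorem X_mul_mem_span_X_image_iff [CommSemiring R] {s : Set σ} {i : σ} (hi : i ∉ s)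
    {p : MvPolynomial σ R} :
    X i * p ∈ Ideal.span (X '' s) ↔ p ∈ Ideal.span (X '' s) := by
  refine ⟨fun h => ?_, Ideal.mul_mem_left _ _⟩
  rw [mem_ideal_span_X_image] at h ⊢
  intro m hm
  have hm' : Finsupp.single i 1 + m ∈ (X i * p).support := by
    rw [mem_support_iff, coeff_X_mul]
    exact mem_support_iff.1 hm
  obtain ⟨j, hj, hmj⟩ := h _ hm'
  have hij : i ≠ j := fun hij => hi (hij ▸ hj)
  exact ⟨j, hj, by simpa [Finsupp.single_apply, hij] using hmj⟩

theorem IsHomogeneous.homogeneousComponent_mul [CommSemiring R] {φ : MvPolynomial σ R} {m : ℕ}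
    (hφ : φ.IsHomogeneous m) (ψ : MvPolynomial σ R) (n : ℕ) :
    homogeneousComponent (m + n) (φ * ψ) = φ * homogeneousComponent n ψ := by
  conv_lhs => rw [← sum_homogeneousComponent ψ]
  rw [Finset.mul_sum, map_sum]
  have hterm : ∀ k, homogeneousComponent (m + n) (φ * homogeneousComponent k ψ) =
      if k = n then φ * homogeneousComponent k ψ else 0 := fun k => by
    rw [homogeneousComponent_of_mem (hφ.mul (homogeneousComponent_isHomogeneous k ψ))]
    simp only [Nat.add_left_cancel_iff, eq_comm]
  simp only [hterm, Finset.sum_ite_eq', Finset.mem_range]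
  split_ifs with hn
  · rfl
  · rw [homogeneousComponent_eq_zero _ _ (by omega), mul_zero]

theorem homogeneousComponent_succ_X_mul [CommSemiring R] (i : σ) (p : MvPolynomial σ R)
    (n : ℕ) : homogeneousComponent (n + 1) (X i * p) = X i * homogeneousComponent n p := by
  rw [add_comm, (isHomogeneous_X R i).homogeneousComponent_mul]

theorem exists_eq_cross_X_of_X_mul_add_eq_zero [CommRing R] {A B C : MvPolynomial (Fin 3) R}
    (h : X 0 * A + X 1 * B + X 2 * C = 0) :
    ∃ P Q S : MvPolynomial (Fin 3) R,
      A = X 2 * Q - X 1 * S ∧ B = X 0 * S - X 2 * P ∧ C = X 1 * P - X 0 * Q := by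
  have hXA : X 0 * A ∈ Ideal.span (X '' {1, 2}) := by
    rw [Set.image_pair, Ideal.mem_span_pair]
    exact ⟨-B, -C, by linear_combination -h⟩
  rw [X_mul_mem_span_X_image_iff (by decide), Set.image_pair, Ideal.mem_span_pair] at hXA
  obtain ⟨S', Q, hA⟩ := hXA
  have hXB : X 1 * (B - X 0 * -S') ∈ Ideal.span (X '' {2}) := by
    rw [Set.image_singleton, Ideal.mem_span_singleton']
    exact ⟨-(C + X 0 * Q), by linear_combination -h - X 0 * hA⟩
  rw [X_mul_mem_span_X_image_iff (by decide), Set.image_singleton,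
    Ideal.mem_span_singleton'] at hXB
  obtain ⟨P', hB⟩ := hXB
  refine ⟨-P', Q, -S', by linear_combination -hA, by linear_combination -hB, ?_⟩
  rw [← X_mul_cancel_left_iff (i := 2)]
  linear_combination h + X 0 * hA + X 1 * hB

end MvPolynomial

/-- Characterization of projective 1-forms: if `A, B, C` are homogeneous of degree `d+1` and
`X·A + Y·B + Z·C = 0`, then there exist homogeneous `P, Q, R` of degree `d` with
`A = ZQ - YR`, `B = XR - ZP`, `C = YP - XQ`. -/
theorem stmt_6 (d : ℕ) (A B C : MvPolynomial (Fin 3) ℂ)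
    (hA : A.IsHomogeneous (d + 1)) (hB : B.IsHomogeneous (d + 1))
    (hC : C.IsHomogeneous (d + 1))
    (h : MvPolynomial.X 0 * A + MvPolynomial.X 1 * B + MvPolynomial.X 2 * C = 0) :
    ∃ P Q R : MvPolynomial (Fin 3) ℂ,
      P.IsHomogeneous d ∧ Q.IsHomogeneous d ∧ R.IsHomogeneous d ∧
      A = MvPolynomial.X 2 * Q - MvPolynomial.X 1 * R ∧
      B = MvPolynomial.X 0 * R - MvPolynomial.X 2 * P ∧
      C = MvPolynomial.X 1 * P - MvPolynomial.X 0 * Q := by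
  obtain ⟨P, Q, R, rfl, rfl, rfl⟩ := exists_eq_cross_X_of_X_mul_add_eq_zero h
  refine ⟨homogeneousComponent d P, homogeneousComponent d Q, homogeneousComponent d R,
    homogeneousComponent_isHomogeneous _ _, homogeneousComponent_isHomogeneous _ _,
    homogeneousComponent_isHomogeneous _ _, ?_, ?_, ?_⟩ <;>
  simp only [← homogeneousComponent_succ_X_mul, ← map_sub]
  exacts [(homogeneousComponent_eq_self hA).symm, (homogeneousComponent_eq_self hB).symm,
    (homogeneousComponent_eq_self hC).symm]
end

section
/- Let f, g ∈ ℂ[x,y] vanish at the origin with common multiplicity s (i.e. both have order exactly s at 0), and let ω = ā dx + b̄ dy be the 1-form associated to the pencil of f and g. Under the substitution (x,y) = (x', x'y') (blow-up chart), the pullback of the pencil-associated 1-form of f and g equals (x')^{2s} times the pencil-associated 1-form of the strict transforms f̃ = f(x',x'y')/(x')^s and g̃ = g(x',x'y')/(x')^s; that is, blowing up commutes with taking the associated 1-form of a pencil, up to the factor (x')^{2s}. -/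
open MvPolynomial

/-- Blow-up substitution `(x, y) = (x', x'·y')`. -/
noncomputable def blowupSubst : MvPolynomial (Fin 2) ℂ →ₐ[ℂ] MvPolynomial (Fin 2) ℂ :=
  aeval ![X 0, X 0 * X 1]

lemma bu_X0 : blowupSubst (X 0) = X 0 := by simp [blowupSubst]
lemma bu_X1 : blowupSubst (X 1) = X 0 * X 1 := by simp [blowupSubst]

lemma bu_dvd {p : MvPolynomial (Fin 2) ℂ} {n : ℕ} (h : p.IsHomogeneous n) :
    (X 0 : MvPolynomial (Fin 2) ℂ) ^ n ∣ blowupSubst p := by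
  rw [show blowupSubst p = blowupSubst (∑ v ∈ p.support, monomial v (coeff v p)) from by
    rw [← p.as_sum]]
  rw [map_sum]
  apply Finset.dvd_sum
  intro v hv
  have hvd : v 0 + v 1 = n := by
    have := h (mem_support_iff.mp hv)
    simpa [Finsupp.weight, Finsupp.linearCombination, Finsupp.sum_fintype,
      Fin.sum_univ_two] using this
  have : blowupSubst (monomial v (coeff v p))
      = C (coeff v p) * X 1 ^ (v 1) * X 0 ^ (v 0 + v 1) := by
    rw [monomial_eq]
    simp only [blowupSubst, map_mul, aeval_C]
    rw [Finsupp.prod_fintype _ _ (fun i => pow_zero _), Fin.prod_univ_two]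
    simp only [map_mul, map_pow, aeval_X, Matrix.cons_val_zero, Matrix.cons_val_one,
      Matrix.head_cons, algebraMap_eq]
    rw [mul_pow, pow_add]
    ring
  rw [this, hvd]
  exact ⟨C (coeff v p) * X 1 ^ (v 1), by ring⟩

lemma bu_dvd_low {p : MvPolynomial (Fin 2) ℂ} {s : ℕ}
    (h0 : ∀ i < s, homogeneousComponent i p = 0) :
    (X 0 : MvPolynomial (Fin 2) ℂ) ^ s ∣ blowupSubst p := by
  rw [show blowupSubst p
      = blowupSubst (∑ i ∈ Finset.range (p.totalDegree + 1), homogeneousComponent i p) from by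
    rw [sum_homogeneousComponent]]
  rw [map_sum]
  apply Finset.dvd_sum
  intro i _
  by_cases h : i < s
  · simp [h0 i h]
  · exact dvd_trans (pow_dvd_pow _ (le_of_not_gt h))
      (bu_dvd (homogeneousComponent_isHomogeneous i p))

lemma pderiv1_bu (p : MvPolynomial (Fin 2) ℂ) :
    pderiv 1 (blowupSubst p) = X 0 * blowupSubst (pderiv 1 p) := by
  induction p using MvPolynomial.induction_on with
  | C a => simp [blowupSubst]
  | add p q hp hq => simp only [map_add, hp, hq]; ring
  | mul_X p i hp =>
    fin_cases i <;>
      simp only [map_mul, bu_X0, bu_X1, pderiv_mul, pderiv_X, hp, map_add, Fin.isValue] <;>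
      simp [pderiv_X, bu_X0, bu_X1] <;> ring

lemma pderiv0_bu (p : MvPolynomial (Fin 2) ℂ) :
    pderiv 0 (blowupSubst p) = blowupSubst (pderiv 0 p) + X 1 * blowupSubst (pderiv 1 p) := by
  induction p using MvPolynomial.induction_on with
  | C a => simp [blowupSubst]
  | add p q hp hq => simp only [map_add, hp, hq]; ring
  | mul_X p i hp =>
    fin_cases i <;>
      simp only [map_mul, bu_X0, bu_X1, pderiv_mul, pderiv_X, hp, map_add, Fin.isValue] <;>
      simp [pderiv_X, bu_X0, bu_X1] <;> ring

/-- Blowing up commutes with taking the associated 1-form of a pencil, up to the factor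
`x'^{2s}`: if `f, g` have order exactly `s ≥ 1` at the origin with strict transforms
`f̃ = f(x',x'y')/x'^s` and `g̃ = g(x',x'y')/x'^s`, then the pullback of the pencil 1-form
`(g f_x − f g_x) dx + (g f_y − f g_y) dy` equals `x'^{2s}` times the pencil 1-form of
`f̃, g̃` (the pullback uses `dx = dx'`, `dy = y' dx' + x' dy'`). -/
theorem stmt_18 (s : ℕ) (hs : 0 < s) (f g : MvPolynomial (Fin 2) ℂ)
    (hf0 : ∀ i < s, homogeneousComponent i f = 0) (hfs : homogeneousComponent s f ≠ 0)
    (hg0 : ∀ i < s, homogeneousComponent i g = 0) (hgs : homogeneousComponent s g ≠ 0) :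
    ∃ ft gt : MvPolynomial (Fin 2) ℂ,
      blowupSubst f = X 0 ^ s * ft ∧ blowupSubst g = X 0 ^ s * gt ∧
      blowupSubst (g * pderiv 0 f - f * pderiv 0 g)
          + X 1 * blowupSubst (g * pderiv 1 f - f * pderiv 1 g)
        = X 0 ^ (2 * s) * (gt * pderiv 0 ft - ft * pderiv 0 gt) ∧
      X 0 * blowupSubst (g * pderiv 1 f - f * pderiv 1 g)
        = X 0 ^ (2 * s) * (gt * pderiv 1 ft - ft * pderiv 1 gt) := by
  obtain ⟨t, rfl⟩ : ∃ t, s = t + 1 := ⟨s - 1, (Nat.succ_pred_eq_of_pos hs).symm⟩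
  obtain ⟨ft, hft⟩ := bu_dvd_low hf0
  obtain ⟨gt, hgt⟩ := bu_dvd_low hg0
  refine ⟨ft, gt, hft, hgt, ?_, ?_⟩
  all_goals {
    have hX : (X 0 : MvPolynomial (Fin 2) ℂ) ≠ 0 := X_ne_zero 0
    have hfy : blowupSubst (pderiv 1 f) = X 0 ^ t * pderiv 1 ft := by
      apply mul_left_cancel₀ hX
      rw [← pderiv1_bu, hft]
      simp only [pderiv_mul, pderiv_pow, pderiv_X, Pi.single_eq_of_ne (by decide : (0 : Fin 2) ≠ 1)]
      ring
    have hgy : blowupSubst (pderiv 1 g) = X 0 ^ t * pderiv 1 gt := by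
      apply mul_left_cancel₀ hX
      rw [← pderiv1_bu, hgt]
      simp only [pderiv_mul, pderiv_pow, pderiv_X, Pi.single_eq_of_ne (by decide : (0 : Fin 2) ≠ 1)]
      ring
    have hfx : blowupSubst (pderiv 0 f)
        = ((t : MvPolynomial (Fin 2) ℂ) + 1) * X 0 ^ t * ft + X 0 ^ (t + 1) * pderiv 0 ft
          - X 1 * (X 0 ^ t * pderiv 1 ft) := by
      have h1 := pderiv0_bu f
      rw [hfy, hft] at h1
      have h2 : pderiv 0 (X 0 ^ (t + 1) * ft)
          = ((t : MvPolynomial (Fin 2) ℂ) + 1) * X 0 ^ t * ft + X 0 ^ (t + 1) * pderiv 0 ft := by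
        simp only [pderiv_mul, pderiv_pow, pderiv_X, Pi.single_eq_same, Nat.add_sub_cancel]
        push_cast
        ring
      rw [h2] at h1
      linear_combination -h1
    have hgx : blowupSubst (pderiv 0 g)
        = ((t : MvPolynomial (Fin 2) ℂ) + 1) * X 0 ^ t * gt + X 0 ^ (t + 1) * pderiv 0 gt
          - X 1 * (X 0 ^ t * pderiv 1 gt) := by
      have h1 := pderiv0_bu g
      rw [hgy, hgt] at h1
      have h2 : pderiv 0 (X 0 ^ (t + 1) * gt)
          = ((t : MvPolynomial (Fin 2) ℂ) + 1) * X 0 ^ t * gt + X 0 ^ (t + 1) * pderiv 0 gt := by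
        simp only [pderiv_mul, pderiv_pow, pderiv_X, Pi.single_eq_same, Nat.add_sub_cancel]
        push_cast
        ring
      rw [h2] at h1
      linear_combination -h1
    simp only [map_sub, map_mul, hfx, hgx, hfy, hgy, hft, hgt]
    ring
  }
end
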